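/- (Proposition 7, 2o-moment costs with multiplicative state-and-control dependent noise.) Fix integers N ≥ 1, I ≥ 2, p ≥ 1, o ≥ 1. On a probability space, let x_0 have finite 2o-th moment, and let ε_1,…,ε_N be independent real random variables independent of x_0 with E[ε_{k+1}] = 0 and m_{k+1,2o} := E[ε_{k+1}^{2o}] finite and nonzero. Consider the mean-field-type dynamics x_{k+1} = (ā_k·x̄_k + Σ_{i=1}^I b̄_{ik}·ū_{ik}) + (a_k·(x_k − x̄_k) + Σ_{i=1}^I b_{ik}·(u_{ik} − ū_{ik}))·ε_{k+1}, where x̄_k = E[x_k], ū_{ik} = E[u_{ik}], and the cost E[L_i] with L_i = q_{iN}·E[(x_N − x̄_N)^{2o}] + q̄_{iN}·x̄_N^{2p} + Σ_{k=0}^{N−1} (q_{ik}·E[(x_k − x̄_k)^{2o}] + q̄_{ik}·x̄_k^{2p} + r_{ik}·E[(u_{ik} − ū_{ik})^{2o}] + r̄_{ik}·ū_{ik}^{2p}), all weights positive. Define backwards ᾱ_{iN} = q̄_{iN}, α_{iN} = q_{iN}; κ̄_{ik} = the real (2p−1)-th root of ᾱ_{i,k+1}·b̄_{ik}/r̄_{ik},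 c̄_{ik} = κ̄_{ik}/(1 + κ̄_{ik}·b̄_{ik}); κ̃_{ik} = the real (2o−1)-th root of α_{i,k+1}·b_{ik}·m_{k+1,2o}/r_{ik}, c̃_{ik} = κ̃_{ik}/(1 + κ̃_{ik}·b_{ik}); Ē_k (resp. Ẽ_k) the I×I matrix with unit diagonal and off-diagonal entries c̄_{ik}·b̄_{jk} (resp. c̃_{ik}·b_{jk}); ᾱ_{ik} = q̄_{ik} + r̄_{ik}·((Ē_k⁻¹·c̄_k)_i·ā_k)^{2p} + ᾱ_{i,k+1}·(ā_k − Σ_j (Ē_k⁻¹·c̄_k)_j·ā_k·b̄_{jk})^{2p}; α_{ik} = q_{ik} + r_{ik}·((Ẽ_k⁻¹·c̃_k)_i·a_k)^{2o} + α_{i,k+1}·m_{k+1,2o}·(a_k − Σ_j (Ẽ_k⁻¹·c̃_k)_j·a_k·b_{jk})^{2o}. Assume for every k that Ē_k and Ẽ_k are invertible, 1 + κ̄_{ik}·b̄_{ik} > 0 and 1 + κ̃_{ik}·b_{ik} > 0 for all i. Then the feedback strategies u*_{ik} = −(Ẽ_k⁻¹·c̃_k)_i·a_k·(x_k − x̄_k)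 − (Ē_k⁻¹·c̄_k)_i·ā_k·x̄_k form a Nash equilibrium over adapted strategies with finite 2o-th moments, and the equilibrium expected cost of agent i equals α_{i0}·E[(x_0 − E[x_0])^{2o}] + ᾱ_{i0}·(E[x_0])^{2p}. -/

import Mathlib

open MeasureTheory ProbabilityTheory

/-- The σ-algebra `σ(x₀, ε₁, …, ε_k)` generated by the initial state and the
noises up to time `k`. -/
def sigmaUpTo {Ω : Type*} (x0 : Ω → ℝ) (eps : ℕ → Ω → ℝ) (k : ℕ) :
    MeasurableSpace Ω :=
  MeasurableSpace.comap x0 inferInstance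
    ⊔ ⨆ j ∈ Finset.Icc 1 k, MeasurableSpace.comap (eps j) inferInstance

/-- The state-and-mean-field-type feedback
`−(Ẽ⁻¹·c̃)_j·a·(x − x̄) − (Ē⁻¹·c̄)_j·ā·x̄` of agent `j`. -/
noncomputable def mfFeedback2 {I : ℕ} (Ebar Etil : Matrix (Fin I) (Fin I) ℝ)
    (cbar ctil : Fin I → ℝ) (abar atil m ξ : ℝ) (j : Fin I) : ℝ :=
  -(Etil⁻¹.mulVec ctil j) * atil * (ξ - m) - (Ebar⁻¹.mulVec cbar j) * abar * m

/-- The `2o`-central-moment/`2p`-mean cost of an agent along a state trajectory `x`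
with own controls `v`. -/
noncomputable def momentCost {Ω : Type*} [MeasurableSpace Ω]
    (μ : Measure Ω) (N p o : ℕ) (qN qbarN : ℝ) (q qbar r rbar : ℕ → ℝ)
    (x v : ℕ → Ω → ℝ) : ℝ :=
  qN * (∫ ω, (x N ω - ∫ ω', x N ω' ∂μ) ^ (2 * o) ∂μ)
    + qbarN * (∫ ω, x N ω ∂μ) ^ (2 * p)
    + ∑ k ∈ Finset.range N,
        (q k * (∫ ω, (x k ω - ∫ ω', x k ω' ∂μ) ^ (2 * o) ∂μ)
          + qbar k * (∫ ω, x k ω ∂μ) ^ (2 * p)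
          + r k * (∫ ω, (v k ω - ∫ ω', v k ω' ∂μ) ^ (2 * o) ∂μ)
          + rbar k * (∫ ω, v k ω ∂μ) ^ (2 * p))

open scoped ENNReal

section Helpers

variable {Ω : Type*} [MeasurableSpace Ω] {μ : Measure Ω}

lemma my_indep_mono {m1 m2 m1' m2' : MeasurableSpace Ω} (h : Indep m1 m2 μ)
    (h1 : m1' ≤ m1) (h2 : m2' ≤ m2) : Indep m1' m2' μ := by
  rw [Indep_iff] at h ⊢
  exact fun t1 t2 ht1 ht2 => h t1 t2 (h1 _ ht1) (h2 _ ht2)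

lemma my_memLp_iff_integrable_pow (n : ℕ) (hn : n ≠ 0) (hne : Even n) {X : Ω → ℝ}
    (hX : AEStronglyMeasurable X μ) :
    Integrable (fun ω => X ω ^ n) μ ↔ MemLp X (n : ℝ≥0∞) μ := by
  have h := memLp_norm_rpow_iff (p := (n : ℝ≥0∞)) (q := (n : ℝ≥0∞)) hX
    (by exact_mod_cast hn) (by simp)
  rw [ENNReal.div_self (by exact_mod_cast hn) (by simp), memLp_one_iff_integrable] at h
  rw [← h]
  apply integrable_congr
  filter_upwards with ω
  rw [ENNReal.toReal_natCast, Real.rpow_natCast, Real.norm_eq_abs,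
    hne.pow_abs]

section
lemma my_pow_min (n : ℕ) (hne : Even n) (hn : n ≠ 0) (R C b c v₀ : ℝ)
    (hR : 0 < R) (hC : 0 ≤ C)
    (hfoc : R * v₀ ^ (n - 1) + C * b * (c + b * v₀) ^ (n - 1) = 0) (v : ℝ) :
    R * v₀ ^ n + C * (c + b * v₀) ^ n ≤ R * v ^ n + C * (c + b * v) ^ n := by
  set f : ℝ → ℝ := fun t => R * t ^ n + C * (c + b * t) ^ n with hf
  set f' : ℝ → ℝ := fun t => n * (R * t ^ (n - 1) + C * b * (c + b * t) ^ (n - 1)) with hf'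
  have hderiv : ∀ t : ℝ, HasDerivAt f (f' t) t := by
    intro t
    have h1 : HasDerivAt (fun s : ℝ => s ^ n) ((n : ℝ) * t ^ (n - 1)) t := hasDerivAt_pow n t
    have h2 : HasDerivAt (fun s : ℝ => c + b * s) b t := by
      simpa using ((hasDerivAt_id t).const_mul b).const_add c
    have h3 := h2.pow n
    have h4 := (h1.const_mul R).add (h3.const_mul C)
    have e : f' t = R * (↑n * t ^ (n - 1)) + C * (↑n * (c + b * t) ^ (n - 1) * b) := by
      simp only [hf']
      ring
    rw [e]; exact h4
  have hodd : Odd (n - 1) := Nat.Even.sub_odd (Nat.one_le_iff_ne_zero.mpr hn) hne odd_one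
  have hmono : Monotone f' := by
    intro s t hst
    have key1 : R * s ^ (n - 1) ≤ R * t ^ (n - 1) :=
      mul_le_mul_of_nonneg_left (hodd.strictMono_pow.monotone hst) hR.le
    have key2 : C * b * (c + b * s) ^ (n - 1) ≤ C * b * (c + b * t) ^ (n - 1) := by
      rcases le_total 0 b with hb | hb
      · exact mul_le_mul_of_nonneg_left
          (hodd.strictMono_pow.monotone (by nlinarith)) (by positivity)
      · have : (c + b * t) ^ (n - 1) ≤ (c + b * s) ^ (n - 1) :=
          hodd.strictMono_pow.monotone (by nlinarith)
        have hcb : C * b ≤ 0 := mul_nonpos_of_nonneg_of_nonpos hC hb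
        exact mul_le_mul_of_nonpos_left this hcb
    have : R * s ^ (n - 1) + C * b * (c + b * s) ^ (n - 1)
        ≤ R * t ^ (n - 1) + C * b * (c + b * t) ^ (n - 1) := by linarith
    exact mul_le_mul_of_nonneg_left this (by positivity)
  have hf'v₀ : f' v₀ = 0 := by simp only [hf', hfoc, mul_zero]
  have hcont : Continuous f := by fun_prop
  rcases lt_trichotomy v v₀ with hlt | heq | hgt
  · obtain ⟨ξ, hξ, hsl⟩ := exists_hasDerivAt_eq_slope f f' hlt
      (hcont.continuousOn) (fun y _ => hderiv y)
    rw [eq_div_iff (by linarith : v₀ - v ≠ 0)] at hsl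
    have hle : f' ξ ≤ 0 := hf'v₀ ▸ hmono hξ.2.le
    have h2 : f v₀ - f v ≤ 0 := by nlinarith [sub_pos.mpr hlt]
    show f v₀ ≤ f v
    linarith
  · show f v₀ ≤ f v
    simp [heq]
  · obtain ⟨ξ, hξ, hsl⟩ := exists_hasDerivAt_eq_slope f f' hgt
      (hcont.continuousOn) (fun y _ => hderiv y)
    rw [eq_div_iff (by linarith : v - v₀ ≠ 0)] at hsl
    have hge : 0 ≤ f' ξ := hf'v₀ ▸ hmono hξ.1.le
    have h2 : 0 ≤ f v - f v₀ := by nlinarith [sub_pos.mpr hgt]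
    show f v₀ ≤ f v
    linarith

lemma my_stage_scalar (n : ℕ) (hne : Even n) (hn : n ≠ 0)
    (R C b κ η lam s v : ℝ) (hR : 0 < R) (hC : 0 ≤ C)
    (hη : η = κ * lam) (hκ : R * κ ^ (n - 1) = C * b) :
    (R * η ^ n + C * lam ^ n) * s ^ n
      ≤ R * v ^ n + C * ((lam + b * η) * s + b * v) ^ n := by
  have hodd : Odd (n - 1) := Nat.Even.sub_odd (Nat.one_le_iff_ne_zero.mpr hn) hne odd_one
  have hfoc : R * (-(η * s)) ^ (n - 1)
      + C * b * ((lam + b * η) * s + b * (-(η * s))) ^ (n - 1) = 0 := by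
    have h1 : (lam + b * η) * s + b * (-(η * s)) = lam * s := by ring
    rw [h1, hodd.neg_pow]
    have h2 : R * η ^ (n - 1) = C * b * lam ^ (n - 1) := by
      rw [hη, mul_pow, ← mul_assoc, hκ]
    rw [mul_pow, mul_pow]
    linear_combination (-(s ^ (n-1))) * h2
  have key := my_pow_min n hne hn R C b ((lam + b * η) * s) (-(η * s)) hR hC hfoc v
  have h1 : (lam + b * η) * s + b * (-(η * s)) = lam * s := by ring
  rw [h1, hne.neg_pow, mul_pow, mul_pow] at key
  calc (R * η ^ n + C * lam ^ n) * s ^ n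
      = R * (η ^ n * s ^ n) + C * (lam ^ n * s ^ n) := by ring
    _ ≤ _ := key

lemma my_matrix_foc {I : ℕ} (E : Matrix (Fin I) (Fin I) ℝ) (hE : IsUnit E)
    (cvec κvec bvec : Fin I → ℝ)
    (hdiag : ∀ i, E i i = 1) (hoff : ∀ i j, i ≠ j → E i j = cvec i * bvec j)
    (hc : ∀ i, cvec i = κvec i / (1 + κvec i * bvec i))
    (hden : ∀ i, 0 < 1 + κvec i * bvec i) (i : Fin I) :
    E⁻¹.mulVec cvec i = κvec i * (1 - ∑ j, bvec j * E⁻¹.mulVec cvec j) := by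
  set w := E⁻¹.mulVec cvec with hwdef
  have hw : E.mulVec w = cvec := by
    rw [hwdef, Matrix.mulVec_mulVec,
      Matrix.mul_nonsing_inv _ ((Matrix.isUnit_iff_isUnit_det E).mp hE),
      Matrix.one_mulVec]
  have hrow : ∑ j, E i j * w j = cvec i := by
    have := congrFun hw i
    simpa [Matrix.mulVec, dotProduct] using this
  have hsplit : E i i * w i + ∑ j ∈ Finset.univ.erase i, E i j * w j = cvec i := by
    rw [← hrow, Finset.add_sum_erase _ (fun j => E i j * w j) (Finset.mem_univ i)]
  rw [hdiag i] at hsplit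
  have hofs : ∑ j ∈ Finset.univ.erase i, E i j * w j
      = cvec i * ((∑ j, bvec j * w j) - bvec i * w i) := by
    rw [mul_sub, Finset.mul_sum, ← Finset.sum_erase_eq_sub (Finset.mem_univ i)]
    apply Finset.sum_congr rfl
    intro j hj
    rw [hoff i j (Ne.symm (Finset.ne_of_mem_erase hj))]
    ring
  rw [hofs] at hsplit
  set T := ∑ j, bvec j * w j
  have hd := hden i
  have hci := hc i
  rw [hci] at hsplit
  have hd' : (1 : ℝ) + κvec i * bvec i ≠ 0 := ne_of_gt hd
  field_simp at hsplit
  nlinarith [hsplit]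

end
section
variable {Ω : Type*} [m0 : MeasurableSpace Ω] {μ : Measure Ω}
variable {x0 : Ω → ℝ} {eps : ℕ → Ω → ℝ}

lemma sigmaUpTo_le (hx0 : Measurable x0) (heps : ∀ j, Measurable (eps j)) (k : ℕ) :
    sigmaUpTo x0 eps k ≤ m0 := by
  apply sup_le hx0.comap_le
  apply iSup_le; intro j; apply iSup_le; intro _
  exact (heps j).comap_le

lemma sigmaUpTo_mono {k l : ℕ} (h : k ≤ l) : sigmaUpTo x0 eps k ≤ sigmaUpTo x0 eps l := by
  apply sup_le le_sup_left
  apply iSup_le; intro j; apply iSup_le; intro hj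
  refine le_trans ?_ le_sup_right
  have hj' : j ∈ Finset.Icc 1 l := by
    simp only [Finset.mem_Icc] at hj ⊢; omega
  exact le_iSup₂ (f := fun j (_ : j ∈ Finset.Icc 1 l) =>
    MeasurableSpace.comap (eps j) inferInstance) j hj'

lemma x0_meas_sigmaUpTo (k : ℕ) : @Measurable Ω ℝ (sigmaUpTo x0 eps k) _ x0 :=
  Measurable.of_comap_le le_sup_left

lemma eps_meas_sigmaUpTo {j k : ℕ} (h1 : 1 ≤ j) (hk : j ≤ k) :
    @Measurable Ω ℝ (sigmaUpTo x0 eps k) _ (eps j) := by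
  apply Measurable.of_comap_le
  refine le_trans ?_ le_sup_right
  exact le_iSup₂ (f := fun j (_ : j ∈ Finset.Icc 1 k) =>
    MeasurableSpace.comap (eps j) inferInstance) j (by simp [Finset.mem_Icc, h1, hk])

lemma indepFun_of_sigmaUpTo (N : ℕ)
    (hx0 : Measurable x0) (heps : ∀ j, Measurable (eps j))
    (hindep : iIndepFun
      (fun k : Fin (N + 1) => if (k : ℕ) = 0 then x0 else eps k) μ)
    (k : ℕ) (hk : k + 1 ≤ N) {D : Ω → ℝ}
    (hD : @Measurable Ω ℝ (sigmaUpTo x0 eps k) _ D) :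
    IndepFun D (eps (k + 1)) μ := by
  set F : Fin (N + 1) → Ω → ℝ := fun j => if (j : ℕ) = 0 then x0 else eps j with hF
  have hFmeas : ∀ j, Measurable (F j) := by
    intro j; simp only [hF]; split_ifs
    · exact hx0
    · exact heps _
  have hiI : iIndep (fun j : Fin (N + 1) =>
      MeasurableSpace.comap (F j) inferInstance) μ := hindep.iIndep
  have hind := indep_iSup_of_disjoint (fun j => (hFmeas j).comap_le) hiI
    (S := {j : Fin (N + 1) | (j : ℕ) ≤ k}) (T := {j : Fin (N + 1) | (j : ℕ) = k + 1})
    (by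
      rw [Set.disjoint_left]
      rintro j hj1 hj2
      simp only [Set.mem_setOf_eq] at hj1 hj2
      omega)
  have hS : sigmaUpTo x0 eps k ≤
      ⨆ j ∈ {j : Fin (N + 1) | (j : ℕ) ≤ k}, MeasurableSpace.comap (F j) inferInstance := by
    apply sup_le
    · have h0 : F (⟨0, by omega⟩ : Fin (N + 1)) = x0 := by simp [hF]
      have hle := le_iSup₂ (f := fun j (_ : j ∈ {j : Fin (N + 1) | (j : ℕ) ≤ k}) =>
        MeasurableSpace.comap (F j) inferInstance) ⟨0, by omega⟩ (by simp)
      rwa [h0] at hle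
    · apply iSup_le; intro j; apply iSup_le; intro hj
      simp only [Finset.mem_Icc] at hj
      have hjN : j < N + 1 := by omega
      have h1 : F (⟨j, hjN⟩ : Fin (N + 1)) = eps j := by
        simp only [hF]
        rw [if_neg (show ¬((⟨j, hjN⟩ : Fin (N + 1)) : ℕ) = 0 by simp only [Fin.val_mk]; omega)]
      have hle := le_iSup₂ (f := fun j (_ : j ∈ {j : Fin (N + 1) | (j : ℕ) ≤ k}) =>
        MeasurableSpace.comap (F j) inferInstance) ⟨j, hjN⟩
        (by simp only [Set.mem_setOf_eq, Fin.val_mk]; omega)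
      rwa [h1] at hle
  have hT : MeasurableSpace.comap (eps (k + 1)) inferInstance ≤
      ⨆ j ∈ {j : Fin (N + 1) | (j : ℕ) = k + 1}, MeasurableSpace.comap (F j) inferInstance := by
    have hkN : k + 1 < N + 1 := by omega
    have h1 : F (⟨k + 1, hkN⟩ : Fin (N + 1)) = eps (k + 1) := by
      simp only [hF]
      rw [if_neg (show ¬((⟨k + 1, hkN⟩ : Fin (N + 1)) : ℕ) = 0 by
        simp only [Fin.val_mk]; omega)]
    have hle := le_iSup₂ (f := fun j (_ : j ∈ {j : Fin (N + 1) | (j : ℕ) = k + 1}) =>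
      MeasurableSpace.comap (F j) inferInstance) ⟨k + 1, hkN⟩ (by simp)
    rwa [h1] at hle
  rw [IndepFun_iff_Indep]
  exact my_indep_mono hind (le_trans hD.comap_le hS) hT

end
section
variable [IsProbabilityMeasure μ]

lemma my_one_le_coe (n : ℕ) (hn : n ≠ 0) : (1 : ℝ≥0∞) ≤ (n : ℝ≥0∞) := by
  exact_mod_cast Nat.one_le_iff_ne_zero.mpr hn

lemma my_step (n : ℕ) (hn : n ≠ 0) (hne : Even n)
    {X' Q E : Ω → ℝ} {P : ℝ}
    (hX' : ∀ ω, X' ω = P + Q ω * E ω)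
    (hQm : Measurable Q) (hQL : MemLp Q (n : ℝ≥0∞) μ)
    (hEm : Measurable E) (hEL : Integrable (fun ω => E ω ^ n) μ)
    (hEmean : ∫ ω, E ω ∂μ = 0)
    (hQE : IndepFun Q E μ) :
    MemLp X' (n : ℝ≥0∞) μ ∧ (∫ ω, X' ω ∂μ = P) ∧
      (∫ ω, (X' ω - ∫ ω', X' ω' ∂μ) ^ n ∂μ
        = (∫ ω, Q ω ^ n ∂μ) * (∫ ω, E ω ^ n ∂μ)) := by
  have hXfun : X' = fun ω => P + Q ω * E ω := funext hX'
  have hEL' : MemLp E (n : ℝ≥0∞) μ :=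
    (my_memLp_iff_integrable_pow n hn hne hEm.aestronglyMeasurable).mp hEL
  have hQint : Integrable Q μ := hQL.integrable (my_one_le_coe n hn)
  have hEint : Integrable E μ := hEL'.integrable (my_one_le_coe n hn)
  have hQpow : Integrable (fun ω => Q ω ^ n) μ :=
    (my_memLp_iff_integrable_pow n hn hne hQm.aestronglyMeasurable).mpr hQL
  have hQE2 : IndepFun (fun ω => Q ω ^ n) (fun ω => E ω ^ n) μ :=
    hQE.comp (measurable_id.pow_const n) (measurable_id.pow_const n)
  have hprod_int : Integrable (fun ω => Q ω ^ n * E ω ^ n) μ :=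
    hQE2.integrable_mul hQpow hEL
  have hprodpow : Integrable (fun ω => (Q ω * E ω) ^ n) μ := by
    simpa [mul_pow] using hprod_int
  have hQEi : Integrable (fun ω => Q ω * E ω) μ := hQE.integrable_mul hQint hEint
  have hQEmm : MemLp (fun ω => Q ω * E ω) (n : ℝ≥0∞) μ :=
    (my_memLp_iff_integrable_pow n hn hne (hQm.mul hEm).aestronglyMeasurable).mp hprodpow
  have hmemX : MemLp X' (n : ℝ≥0∞) μ := by
    rw [hXfun]
    exact (memLp_const P).add hQEmm
  have hQEzero : ∫ ω, Q ω * E ω ∂μ = 0 := by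
    have h := hQE.integral_mul_eq_mul_integral hQint.1 hEint.1
    simpa [Pi.mul_apply, hEmean] using h
  have hmean : ∫ ω, X' ω ∂μ = P := by
    rw [hXfun, integral_add (integrable_const P) hQEi, hQEzero, integral_const]
    simp
  refine ⟨hmemX, hmean, ?_⟩
  have hcent : ∀ ω, X' ω - ∫ ω', X' ω' ∂μ = Q ω * E ω := by
    intro ω; rw [hmean, hX' ω]; ring
  calc ∫ ω, (X' ω - ∫ ω', X' ω' ∂μ) ^ n ∂μ
      = ∫ ω, (Q ω * E ω) ^ n ∂μ := by
        apply integral_congr_ae; filter_upwards with ω; rw [hcent ω]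
    _ = ∫ ω, Q ω ^ n * E ω ^ n ∂μ := by simp [mul_pow]
    _ = (∫ ω, Q ω ^ n ∂μ) * (∫ ω, E ω ^ n ∂μ) := by
        have h := hQE2.integral_mul_eq_mul_integral hQpow.1 hEL.1
        simpa [Pi.mul_apply] using h

lemma step_dev {Ω : Type*} [m0 : MeasurableSpace Ω] (μ : Measure Ω) [IsProbabilityMeasure μ]
    (o N k : ℕ) (ho : 1 ≤ o) (hk : k + 1 ≤ N)
    {x0 : Ω → ℝ} (hx0m : Measurable x0) {eps : ℕ → Ω → ℝ} (hepsm : ∀ j, Measurable (eps j))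
    (hindep : iIndepFun
      (fun k : Fin (N + 1) => if (k : ℕ) = 0 then x0 else eps k) μ)
    (heps2o : Integrable (fun ω => eps (k + 1) ω ^ (2 * o)) μ)
    (hepsmean : ∫ ω, eps (k + 1) ω ∂μ = 0)
    {I : ℕ} (Eb Et : Matrix (Fin I) (Fin I) ℝ) (cb ct : Fin I → ℝ)
    (ab at' : ℝ) (bb bt : Fin I → ℝ) (i : Fin I) (X X' U : Ω → ℝ)
    (hXL : MemLp X ((2 * o : ℕ) : ℝ≥0∞) μ)
    (hXs : @Measurable Ω ℝ (sigmaUpTo x0 eps k) _ X)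
    (hUL : MemLp U ((2 * o : ℕ) : ℝ≥0∞) μ)
    (hUs : @Measurable Ω ℝ (sigmaUpTo x0 eps k) _ U)
    (hdyn : ∀ ω, X' ω
      = (ab * (∫ ω', X ω' ∂μ) + bb i * (∫ ω', U ω' ∂μ)
          + ∑ j ∈ Finset.univ.erase i, bb j
              * ∫ ω', mfFeedback2 Eb Et cb ct ab at' (∫ ω'', X ω'' ∂μ) (X ω') j ∂μ)
        + (at' * (X ω - ∫ ω', X ω' ∂μ) + bt i * (U ω - ∫ ω', U ω' ∂μ)
            + ∑ j ∈ Finset.univ.erase i, bt j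
                * (mfFeedback2 Eb Et cb ct ab at' (∫ ω'', X ω'' ∂μ) (X ω) j
                  - ∫ ω', mfFeedback2 Eb Et cb ct ab at' (∫ ω'', X ω'' ∂μ) (X ω') j ∂μ))
          * eps (k + 1) ω) :
    MemLp X' ((2 * o : ℕ) : ℝ≥0∞) μ ∧
    (@Measurable Ω ℝ (sigmaUpTo x0 eps (k + 1)) _ X') ∧
    (∫ ω, X' ω ∂μ
      = ((ab - ∑ j, Eb⁻¹.mulVec cb j * ab * bb j) + Eb⁻¹.mulVec cb i * ab * bb i)
          * (∫ ω, X ω ∂μ) + bb i * (∫ ω, U ω ∂μ)) ∧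
    (∫ ω, (X' ω - ∫ ω', X' ω' ∂μ) ^ (2 * o) ∂μ
      = (∫ ω, (((at' - ∑ j, Et⁻¹.mulVec ct j * at' * bt j) + bt i * (Et⁻¹.mulVec ct i * at'))
            * (X ω - ∫ ω', X ω' ∂μ) + bt i * (U ω - ∫ ω', U ω' ∂μ)) ^ (2 * o) ∂μ)
          * (∫ ω, eps (k + 1) ω ^ (2 * o) ∂μ)) ∧
    Integrable (fun ω => (((at' - ∑ j, Et⁻¹.mulVec ct j * at' * bt j)
        + bt i * (Et⁻¹.mulVec ct i * at'))
        * (X ω - ∫ ω', X ω' ∂μ) + bt i * (U ω - ∫ ω', U ω' ∂μ)) ^ (2 * o)) μ := by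
  have hn0 : (2 * o) ≠ 0 := by omega
  have hne : Even (2 * o) := even_two_mul o
  set wtv : Fin I → ℝ := Et⁻¹.mulVec ct with hwtv
  set wbv : Fin I → ℝ := Eb⁻¹.mulVec cb with hwbv
  set xb := ∫ ω, X ω ∂μ with hxb
  set ub := ∫ ω, U ω ∂μ with hub
  set Atl : ℝ := (at' - ∑ j, wtv j * at' * bt j) + bt i * (wtv i * at') with hAtl
  set Abr : ℝ := (ab - ∑ j, wbv j * ab * bb j) + wbv i * ab * bb i with hAbr
  set Q : Ω → ℝ := fun ω => Atl * (X ω - xb) + bt i * (U ω - ub) with hQ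
  set P : ℝ := Abr * xb + bb i * ub with hP
  have hXm : Measurable X := hXs.mono (sigmaUpTo_le hx0m hepsm k) le_rfl
  have hUm : Measurable U := hUs.mono (sigmaUpTo_le hx0m hepsm k) le_rfl
  have hXint : Integrable X μ := hXL.integrable (my_one_le_coe _ hn0)
  have hXsub : Integrable (fun ω' => X ω' - xb) μ := hXint.sub (integrable_const xb)
  -- integral of the feedback of other players
  have hfeedint : ∀ j : Fin I,
      ∫ ω', mfFeedback2 Eb Et cb ct ab at' xb (X ω') j ∂μ = -(wbv j * ab * xb) := by
    intro j
    have heq : (fun ω' => mfFeedback2 Eb Et cb ct ab at' xb (X ω') j)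
        = fun ω' => (-(wtv j) * at') * (X ω' - xb) + (-(wbv j * ab * xb)) := by
      funext ω'
      simp only [mfFeedback2, hwtv, hwbv]
      ring
    rw [heq, integral_add (hXsub.const_mul _) (integrable_const _),
      integral_const_mul, integral_sub hXint (integrable_const xb), integral_const]
    simp [hxb]
  have hfeeddev : ∀ (j : Fin I) (ω : Ω),
      mfFeedback2 Eb Et cb ct ab at' xb (X ω) j
        - ∫ ω', mfFeedback2 Eb Et cb ct ab at' xb (X ω') j ∂μ
      = (-(wtv j * at')) * (X ω - xb) := by
    intro j ω
    rw [hfeedint j]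
    simp only [mfFeedback2, hwtv, hwbv]
    ring
  -- rewrite dynamics
  have hdyn' : ∀ ω, X' ω = P + Q ω * eps (k + 1) ω := by
    intro ω
    rw [hdyn ω]
    have hs1 : ∑ j ∈ Finset.univ.erase i, bb j
        * ∫ ω', mfFeedback2 Eb Et cb ct ab at' xb (X ω') j ∂μ
        = -(∑ j, wbv j * ab * bb j) * xb + (wbv i * ab * bb i) * xb := by
      have h1 : ∀ j : Fin I, bb j * ∫ ω', mfFeedback2 Eb Et cb ct ab at' xb (X ω') j ∂μ
          = -(wbv j * ab * bb j) * xb := by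
        intro j; rw [hfeedint j]; ring
      rw [Finset.sum_congr rfl fun j _ => h1 j,
        Finset.sum_erase_eq_sub (Finset.mem_univ i)]
      rw [show ∑ j : Fin I, -(wbv j * ab * bb j) * xb
          = (∑ j : Fin I, -(wbv j * ab * bb j)) * xb from (Finset.sum_mul _ _ _).symm]
      rw [Finset.sum_neg_distrib]
      ring
    have hs2 : ∑ j ∈ Finset.univ.erase i, bt j
        * (mfFeedback2 Eb Et cb ct ab at' xb (X ω) j
          - ∫ ω', mfFeedback2 Eb Et cb ct ab at' xb (X ω') j ∂μ)
        = -(∑ j, wtv j * at' * bt j) * (X ω - xb) + (bt i * (wtv i * at')) * (X ω - xb) := by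
      have h1 : ∀ j : Fin I, bt j * (mfFeedback2 Eb Et cb ct ab at' xb (X ω) j
          - ∫ ω', mfFeedback2 Eb Et cb ct ab at' xb (X ω') j ∂μ)
          = -(wtv j * at' * bt j) * (X ω - xb) := by
        intro j; rw [hfeeddev j ω]; ring
      rw [Finset.sum_congr rfl fun j _ => h1 j,
        Finset.sum_erase_eq_sub (Finset.mem_univ i)]
      rw [show ∑ j : Fin I, -(wtv j * at' * bt j) * (X ω - xb)
          = (∑ j : Fin I, -(wtv j * at' * bt j)) * (X ω - xb) from (Finset.sum_mul _ _ _).symm]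
      rw [Finset.sum_neg_distrib]
      ring
    rw [hs1, hs2]
    simp only [hP, hQ, hAbr, hAtl]
    ring
  -- properties of Q
  have hQs : @Measurable Ω ℝ (sigmaUpTo x0 eps k) _ Q := by
    apply Measurable.add
    · exact (hXs.sub measurable_const).const_mul Atl
    · exact (hUs.sub measurable_const).const_mul (bt i)
  have hQm : Measurable Q := hQs.mono (sigmaUpTo_le hx0m hepsm k) le_rfl
  have hQL : MemLp Q ((2 * o : ℕ) : ℝ≥0∞) μ := by
    apply MemLp.add
    · exact (hXL.sub (memLp_const xb)).const_mul Atl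
    · exact (hUL.sub (memLp_const ub)).const_mul (bt i)
  have hQE : IndepFun Q (eps (k + 1)) μ :=
    indepFun_of_sigmaUpTo N hx0m hepsm hindep k hk hQs
  obtain ⟨hmem, hmean, hcm⟩ := my_step (2 * o) hn0 hne hdyn' hQm hQL
    (hepsm (k + 1)) heps2o hepsmean hQE
  have hQpow : Integrable (fun ω => Q ω ^ (2 * o)) μ :=
    (my_memLp_iff_integrable_pow _ hn0 hne hQm.aestronglyMeasurable).mpr hQL
  refine ⟨hmem, ?_, ?_, ?_, ?_⟩
  · have hX'eq : X' = fun ω => P + Q ω * eps (k + 1) ω := funext hdyn'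
    rw [hX'eq]
    apply Measurable.add measurable_const
    exact (hQs.mono (sigmaUpTo_mono (Nat.le_succ k)) le_rfl).mul
      (eps_meas_sigmaUpTo (by omega) (le_refl (k + 1)))
  · exact hmean
  · exact hcm
  · exact hQpow

end

end Helpers

/-- Proposition 7 (`2o`-moment costs under multiplicative state-control-and-mean-field
dependent noise): the feedback strategies
`u*_{ik} = −(Ẽ_k⁻¹·c̃_k)_i·a_k·(x_k − x̄_k) − (Ē_k⁻¹·c̄_k)_i·ā_k·x̄_k` form a Nash
equilibrium over adapted strategies with finite `2o`-th moments, and the equilibrium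
expected cost of agent `i` equals
`α_{i0}·E[(x₀ − E[x₀])^(2o)] + ᾱ_{i0}·(E[x₀])^(2p)`. -/
theorem moment_cost_multiplicative_noise_game_nash {Ω : Type*} [MeasurableSpace Ω]
    (μ : Measure Ω) [IsProbabilityMeasure μ]
    (N I p o : ℕ) (hN : 1 ≤ N) (hI : 2 ≤ I) (hp : 1 ≤ p) (ho : 1 ≤ o)
    (abar atil : ℕ → ℝ) (bbar btil : Fin I → ℕ → ℝ)
    (q qbar r rbar : Fin I → ℕ → ℝ) (qN qbarN : Fin I → ℝ)
    (hq : ∀ i k, k < N → 0 < q i k) (hqbar : ∀ i k, k < N → 0 < qbar i k)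
    (hr : ∀ i k, k < N → 0 < r i k) (hrbar : ∀ i k, k < N → 0 < rbar i k)
    (hqN : ∀ i, 0 < qN i) (hqbarN : ∀ i, 0 < qbarN i)
    (x0 : Ω → ℝ) (hx0m : Measurable x0)
    (hx02o : Integrable (fun ω => x0 ω ^ (2 * o)) μ)
    (eps : ℕ → Ω → ℝ) (hepsm : ∀ k, Measurable (eps k))
    (hepsmean : ∀ k, 1 ≤ k → k ≤ N → ∫ ω, eps k ω ∂μ = 0)
    (heps2o : ∀ k, 1 ≤ k → k ≤ N → Integrable (fun ω => eps k ω ^ (2 * o)) μ)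
    (heps2oNe : ∀ k, 1 ≤ k → k ≤ N → (∫ ω, eps k ω ^ (2 * o) ∂μ) ≠ 0)
    (hindep : iIndepFun
      (fun k : Fin (N + 1) => if (k : ℕ) = 0 then x0 else eps k) μ)
    (alphabar alpha kappabar kappatil cbar ctil : Fin I → ℕ → ℝ)
    (Ebar Etil : ℕ → Matrix (Fin I) (Fin I) ℝ)
    (halphabarN : ∀ i, alphabar i N = qbarN i)
    (halphaN : ∀ i, alpha i N = qN i)
    (hkappabar : ∀ i k, k < N →
      kappabar i k ^ (2 * p - 1) = alphabar i (k + 1) * bbar i k / rbar i k)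
    (hcbar : ∀ i k, k < N → cbar i k = kappabar i k / (1 + kappabar i k * bbar i k))
    (hkappatil : ∀ i k, k < N →
      kappatil i k ^ (2 * o - 1)
        = alpha i (k + 1) * btil i k * (∫ ω, eps (k + 1) ω ^ (2 * o) ∂μ) / r i k)
    (hctil : ∀ i k, k < N → ctil i k = kappatil i k / (1 + kappatil i k * btil i k))
    (hEbard : ∀ k, k < N → ∀ i, Ebar k i i = 1)
    (hEbaro : ∀ k, k < N → ∀ i j, i ≠ j → Ebar k i j = cbar i k * bbar j k)
    (hEtild : ∀ k, k < N → ∀ i, Etil k i i = 1)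
    (hEtilo : ∀ k, k < N → ∀ i j, i ≠ j → Etil k i j = ctil i k * btil j k)
    (hEbarinv : ∀ k, k < N → IsUnit (Ebar k))
    (hEtilinv : ∀ k, k < N → IsUnit (Etil k))
    (hden1 : ∀ i k, k < N → 0 < 1 + kappabar i k * bbar i k)
    (hden2 : ∀ i k, k < N → 0 < 1 + kappatil i k * btil i k)
    (halphabar : ∀ i k, k < N →
      alphabar i k = qbar i k
        + rbar i k * ((Ebar k)⁻¹.mulVec (fun l => cbar l k) i * abar k) ^ (2 * p)
        + alphabar i (k + 1)
            * (abar k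
                - ∑ j, (Ebar k)⁻¹.mulVec (fun l => cbar l k) j * abar k * bbar j k)
              ^ (2 * p))
    (halpha : ∀ i k, k < N →
      alpha i k = q i k
        + r i k * ((Etil k)⁻¹.mulVec (fun l => ctil l k) i * atil k) ^ (2 * o)
        + alpha i (k + 1) * (∫ ω, eps (k + 1) ω ^ (2 * o) ∂μ)
            * (atil k
                - ∑ j, (Etil k)⁻¹.mulVec (fun l => ctil l k) j * atil k * btil j k)
              ^ (2 * o))
    (xstar : ℕ → Ω → ℝ) (hxstar0 : xstar 0 = x0)
    (hxstar : ∀ k, k < N → ∀ ω, xstar (k + 1) ω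
      = (abar k * (∫ ω', xstar k ω' ∂μ)
          + ∑ j, bbar j k
              * ∫ ω', mfFeedback2 (Ebar k) (Etil k) (fun l => cbar l k)
                  (fun l => ctil l k) (abar k) (atil k)
                  (∫ ω'', xstar k ω'' ∂μ) (xstar k ω') j ∂μ)
        + (atil k * (xstar k ω - ∫ ω', xstar k ω' ∂μ)
            + ∑ j, btil j k
                * (mfFeedback2 (Ebar k) (Etil k) (fun l => cbar l k)
                    (fun l => ctil l k) (abar k) (atil k)
                    (∫ ω'', xstar k ω'' ∂μ) (xstar k ω) j
                  - ∫ ω', mfFeedback2 (Ebar k) (Etil k) (fun l => cbar l k)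
                      (fun l => ctil l k) (abar k) (atil k)
                      (∫ ω'', xstar k ω'' ∂μ) (xstar k ω') j ∂μ))
          * eps (k + 1) ω) :
    (∀ i : Fin I, ∀ u : ℕ → Ω → ℝ,
      (∀ k, k < N → Integrable (fun ω => u k ω ^ (2 * o)) μ) →
      (∀ k, k < N → @Measurable Ω ℝ (sigmaUpTo x0 eps k) _ (u k)) →
      ∀ x : ℕ → Ω → ℝ, x 0 = x0 →
      (∀ k, k < N → ∀ ω, x (k + 1) ω
        = (abar k * (∫ ω', x k ω' ∂μ) + bbar i k * (∫ ω', u k ω' ∂μ)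
            + ∑ j ∈ Finset.univ.erase i, bbar j k
                * ∫ ω', mfFeedback2 (Ebar k) (Etil k) (fun l => cbar l k)
                    (fun l => ctil l k) (abar k) (atil k)
                    (∫ ω'', x k ω'' ∂μ) (x k ω') j ∂μ)
          + (atil k * (x k ω - ∫ ω', x k ω' ∂μ)
              + btil i k * (u k ω - ∫ ω', u k ω' ∂μ)
              + ∑ j ∈ Finset.univ.erase i, btil j k
                  * (mfFeedback2 (Ebar k) (Etil k) (fun l => cbar l k)
                      (fun l => ctil l k) (abar k) (atil k)
                      (∫ ω'', x k ω'' ∂μ) (x k ω) j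
                    - ∫ ω', mfFeedback2 (Ebar k) (Etil k) (fun l => cbar l k)
                        (fun l => ctil l k) (abar k) (atil k)
                        (∫ ω'', x k ω'' ∂μ) (x k ω') j ∂μ))
            * eps (k + 1) ω) →
      momentCost μ N p o (qN i) (qbarN i) (q i) (qbar i) (r i) (rbar i) xstar
          (fun k ω => mfFeedback2 (Ebar k) (Etil k) (fun l => cbar l k)
            (fun l => ctil l k) (abar k) (atil k)
            (∫ ω', xstar k ω' ∂μ) (xstar k ω) i)
        ≤ momentCost μ N p o (qN i) (qbarN i) (q i) (qbar i) (r i) (rbar i) x u) ∧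
    (∀ i : Fin I,
      momentCost μ N p o (qN i) (qbarN i) (q i) (qbar i) (r i) (rbar i) xstar
          (fun k ω => mfFeedback2 (Ebar k) (Etil k) (fun l => cbar l k)
            (fun l => ctil l k) (abar k) (atil k)
            (∫ ω', xstar k ω' ∂μ) (xstar k ω) i)
        = alpha i 0 * (∫ ω, (x0 ω - ∫ ω', x0 ω' ∂μ) ^ (2 * o) ∂μ)
            + alphabar i 0 * (∫ ω, x0 ω ∂μ) ^ (2 * p)) := by
  
  have hn0 : 2 * o ≠ 0 := by omega
  have hne : Even (2 * o) := even_two_mul o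
  have hnp0 : 2 * p ≠ 0 := by omega
  have hnpe : Even (2 * p) := even_two_mul p
  have hm2nn : ∀ k : ℕ, 0 ≤ ∫ ω, eps k ω ^ (2 * o) ∂μ :=
    fun k => integral_nonneg fun ω => hne.pow_nonneg _
  have halpha_nn' : ∀ (i : Fin I) (d k : ℕ), k + d = N → 0 ≤ alpha i k := by
    intro i d
    induction d with
    | zero =>
      intro k hk
      have hkN : k = N := by omega
      rw [hkN, halphaN i]; exact (hqN i).le
    | succ d ih =>
      intro k hk
      have hkN : k < N := by omega
      rw [halpha i k hkN]
      refine add_nonneg (add_nonneg (hq i k hkN).le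
        (mul_nonneg (hr i k hkN).le (hne.pow_nonneg _)))
        (mul_nonneg (mul_nonneg (ih (k + 1) (by omega)) (hm2nn (k + 1))) (hne.pow_nonneg _))
  have halpha_nn : ∀ (i : Fin I) (k : ℕ), k ≤ N → 0 ≤ alpha i k :=
    fun i k hk => halpha_nn' i (N - k) k (by omega)
  have halphabar_nn' : ∀ (i : Fin I) (d k : ℕ), k + d = N → 0 ≤ alphabar i k := by
    intro i d
    induction d with
    | zero =>
      intro k hk
      have hkN : k = N := by omega
      rw [hkN, halphabarN i]; exact (hqbarN i).le
    | succ d ih =>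
      intro k hk
      have hkN : k < N := by omega
      rw [halphabar i k hkN]
      refine add_nonneg (add_nonneg (hqbar i k hkN).le
        (mul_nonneg (hrbar i k hkN).le (hnpe.pow_nonneg _)))
        (mul_nonneg (ih (k + 1) (by omega)) (hnpe.pow_nonneg _))
  have halphabar_nn : ∀ (i : Fin I) (k : ℕ), k ≤ N → 0 ≤ alphabar i k :=
    fun i k hk => halphabar_nn' i (N - k) k (by omega)
  -- first-order conditions
  have hfoc_t : ∀ (i : Fin I) (k : ℕ), k < N →
      (Etil k)⁻¹.mulVec (fun l => ctil l k) i * atil k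
        = kappatil i k * (atil k
            - ∑ j, (Etil k)⁻¹.mulVec (fun l => ctil l k) j * atil k * btil j k) := by
    intro i k hk
    have hmf := my_matrix_foc (Etil k) (hEtilinv k hk) (fun l => ctil l k)
      (fun l => kappatil l k) (fun l => btil l k) (hEtild k hk)
      (fun a b hab => hEtilo k hk a b hab) (fun l => hctil l k hk)
      (fun l => hden2 l k hk) i
    have hsum : ∑ j, (Etil k)⁻¹.mulVec (fun l => ctil l k) j * atil k * btil j k
        = atil k * ∑ j, btil j k * (Etil k)⁻¹.mulVec (fun l => ctil l k) j := by
      rw [Finset.mul_sum]; exact Finset.sum_congr rfl fun j _ => by ring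
    rw [hmf, hsum]; ring
  have hfoc_b : ∀ (i : Fin I) (k : ℕ), k < N →
      (Ebar k)⁻¹.mulVec (fun l => cbar l k) i * abar k
        = kappabar i k * (abar k
            - ∑ j, (Ebar k)⁻¹.mulVec (fun l => cbar l k) j * abar k * bbar j k) := by
    intro i k hk
    have hmf := my_matrix_foc (Ebar k) (hEbarinv k hk) (fun l => cbar l k)
      (fun l => kappabar l k) (fun l => bbar l k) (hEbard k hk)
      (fun a b hab => hEbaro k hk a b hab) (fun l => hcbar l k hk)
      (fun l => hden1 l k hk) i
    have hsum : ∑ j, (Ebar k)⁻¹.mulVec (fun l => cbar l k) j * abar k * bbar j k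
        = abar k * ∑ j, bbar j k * (Ebar k)⁻¹.mulVec (fun l => cbar l k) j := by
      rw [Finset.mul_sum]; exact Finset.sum_congr rfl fun j _ => by ring
    rw [hmf, hsum]; ring
  have hfocp_t : ∀ (i : Fin I) (k : ℕ), k < N →
      r i k * kappatil i k ^ (2 * o - 1)
        = (alpha i (k + 1) * ∫ ω, eps (k + 1) ω ^ (2 * o) ∂μ) * btil i k := by
    intro i k hk
    have h := hkappatil i k hk
    have hrne : r i k ≠ 0 := (hr i k hk).ne'
    rw [h]; field_simp
  have hfocp_b : ∀ (i : Fin I) (k : ℕ), k < N →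
      rbar i k * kappabar i k ^ (2 * p - 1) = alphabar i (k + 1) * bbar i k := by
    intro i k hk
    have h := hkappabar i k hk
    have hrne : rbar i k ≠ 0 := (hrbar i k hk).ne'
    rw [h]; field_simp
  -- equilibrium trajectory facts
  have i0 : Fin I := ⟨0, by omega⟩
  have hxstar_dyn : ∀ (i : Fin I) (k : ℕ), k < N → ∀ ω, xstar (k + 1) ω
      = (abar k * (∫ ω', xstar k ω' ∂μ)
          + bbar i k * (∫ ω', mfFeedback2 (Ebar k) (Etil k) (fun l => cbar l k)
              (fun l => ctil l k) (abar k) (atil k)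
              (∫ ω'', xstar k ω'' ∂μ) (xstar k ω') i ∂μ)
          + ∑ j ∈ Finset.univ.erase i, bbar j k
              * ∫ ω', mfFeedback2 (Ebar k) (Etil k) (fun l => cbar l k)
                  (fun l => ctil l k) (abar k) (atil k)
                  (∫ ω'', xstar k ω'' ∂μ) (xstar k ω') j ∂μ)
        + (atil k * (xstar k ω - ∫ ω', xstar k ω' ∂μ)
            + btil i k * (mfFeedback2 (Ebar k) (Etil k) (fun l => cbar l k)
                  (fun l => ctil l k) (abar k) (atil k)
                  (∫ ω'', xstar k ω'' ∂μ) (xstar k ω) i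
                - ∫ ω', mfFeedback2 (Ebar k) (Etil k) (fun l => cbar l k)
                    (fun l => ctil l k) (abar k) (atil k)
                    (∫ ω'', xstar k ω'' ∂μ) (xstar k ω') i ∂μ)
            + ∑ j ∈ Finset.univ.erase i, btil j k
                * (mfFeedback2 (Ebar k) (Etil k) (fun l => cbar l k)
                    (fun l => ctil l k) (abar k) (atil k)
                    (∫ ω'', xstar k ω'' ∂μ) (xstar k ω) j
                  - ∫ ω', mfFeedback2 (Ebar k) (Etil k) (fun l => cbar l k)
                      (fun l => ctil l k) (abar k) (atil k)
                      (∫ ω'', xstar k ω'' ∂μ) (xstar k ω') j ∂μ))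
          * eps (k + 1) ω := by
    intro i k hkN ω
    rw [hxstar k hkN ω,
      ← Finset.add_sum_erase _ (fun j => bbar j k
        * ∫ ω', mfFeedback2 (Ebar k) (Etil k) (fun l => cbar l k)
            (fun l => ctil l k) (abar k) (atil k)
            (∫ ω'', xstar k ω'' ∂μ) (xstar k ω') j ∂μ) (Finset.mem_univ i),
      ← Finset.add_sum_erase _ (fun j => btil j k
        * (mfFeedback2 (Ebar k) (Etil k) (fun l => cbar l k)
            (fun l => ctil l k) (abar k) (atil k)
            (∫ ω'', xstar k ω'' ∂μ) (xstar k ω) j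
          - ∫ ω', mfFeedback2 (Ebar k) (Etil k) (fun l => cbar l k)
              (fun l => ctil l k) (abar k) (atil k)
              (∫ ω'', xstar k ω'' ∂μ) (xstar k ω') j ∂μ)) (Finset.mem_univ i)]
    ring
  have hxstarfacts : ∀ k, k ≤ N → MemLp (xstar k) ((2 * o : ℕ) : ℝ≥0∞) μ ∧
      @Measurable Ω ℝ (sigmaUpTo x0 eps k) _ (xstar k) := by
    intro k
    induction k with
    | zero =>
      intro _
      rw [hxstar0]
      exact ⟨(my_memLp_iff_integrable_pow _ hn0 hne hx0m.aestronglyMeasurable).mp hx02o,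
        x0_meas_sigmaUpTo 0⟩
    | succ k ih =>
      intro hk1
      have hkN : k < N := by omega
      obtain ⟨hXL, hXs⟩ := ih (by omega)
      set U : Ω → ℝ := fun ω => mfFeedback2 (Ebar k) (Etil k) (fun l => cbar l k)
        (fun l => ctil l k) (abar k) (atil k) (∫ ω'', xstar k ω'' ∂μ) (xstar k ω) i0
        with hU
      have hUlin : U = fun ω =>
          (-((Etil k)⁻¹.mulVec (fun l => ctil l k) i0) * atil k) * xstar k ω
          + ((Etil k)⁻¹.mulVec (fun l => ctil l k) i0 * atil k * (∫ ω'', xstar k ω'' ∂μ)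
            - (Ebar k)⁻¹.mulVec (fun l => cbar l k) i0 * abar k
              * (∫ ω'', xstar k ω'' ∂μ)) := by
        funext ω; simp only [hU, mfFeedback2]; ring
      have hUL : MemLp U ((2 * o : ℕ) : ℝ≥0∞) μ := by
        rw [hUlin]; exact (hXL.const_mul _).add (memLp_const _)
      have hUs : @Measurable Ω ℝ (sigmaUpTo x0 eps k) _ U := by
        rw [hUlin]; exact (hXs.const_mul _).add measurable_const
      obtain ⟨h1, h2, _, _, _⟩ := step_dev μ o N k ho (by omega) hx0m hepsm hindep
        (heps2o (k + 1) (by omega) (by omega)) (hepsmean (k + 1) (by omega) (by omega))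
        (Ebar k) (Etil k) (fun l => cbar l k) (fun l => ctil l k) (abar k) (atil k)
        (fun l => bbar l k) (fun l => btil l k) i0 (xstar k) (xstar (k + 1)) U
        hXL hXs hUL hUs (hxstar_dyn i0 k hkN)
      exact ⟨h1, h2⟩
  -- mean of the equilibrium feedback
  have hfeedint2 : ∀ (jj : Fin I) (k : ℕ), k < N →
      (∫ ω, mfFeedback2 (Ebar k) (Etil k) (fun l => cbar l k) (fun l => ctil l k)
        (abar k) (atil k) (∫ ω'', xstar k ω'' ∂μ) (xstar k ω) jj ∂μ)
      = -((Ebar k)⁻¹.mulVec (fun l => cbar l k) jj * abar k * ∫ ω, xstar k ω ∂μ) := by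
    intro jj k hk
    have hXint : Integrable (xstar k) μ :=
      (hxstarfacts k (by omega)).1.integrable (my_one_le_coe _ hn0)
    have hXsub : Integrable (fun ω => xstar k ω - ∫ ω', xstar k ω' ∂μ) μ :=
      hXint.sub (integrable_const _)
    have heq : (fun ω => mfFeedback2 (Ebar k) (Etil k) (fun l => cbar l k)
        (fun l => ctil l k) (abar k) (atil k) (∫ ω'', xstar k ω'' ∂μ) (xstar k ω) jj)
        = fun ω => (-((Etil k)⁻¹.mulVec (fun l => ctil l k) jj) * atil k)
            * (xstar k ω - ∫ ω', xstar k ω' ∂μ)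
          + (-((Ebar k)⁻¹.mulVec (fun l => cbar l k) jj * abar k
              * ∫ ω', xstar k ω' ∂μ)) := by
      funext ω; simp only [mfFeedback2]; ring
    rw [heq, integral_add (hXsub.const_mul _) (integrable_const _), integral_const_mul,
      integral_sub hXint (integrable_const _), integral_const]
    simp
  -- one-step recurrences along the equilibrium trajectory
  have hstar_step : ∀ (i : Fin I) (k : ℕ), k < N →
      ((∫ ω, xstar (k + 1) ω ∂μ)
        = (abar k - ∑ j, (Ebar k)⁻¹.mulVec (fun l => cbar l k) j * abar k * bbar j k)
            * ∫ ω, xstar k ω ∂μ) ∧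
      ((∫ ω, (xstar (k + 1) ω - ∫ ω', xstar (k + 1) ω' ∂μ) ^ (2 * o) ∂μ)
        = (atil k - ∑ j, (Etil k)⁻¹.mulVec (fun l => ctil l k) j * atil k * btil j k)
              ^ (2 * o)
            * (∫ ω, eps (k + 1) ω ^ (2 * o) ∂μ)
            * ∫ ω, (xstar k ω - ∫ ω', xstar k ω' ∂μ) ^ (2 * o) ∂μ) := by
    intro i k hkN
    obtain ⟨hXL, hXs⟩ := hxstarfacts k (by omega)
    set U : Ω → ℝ := fun ω => mfFeedback2 (Ebar k) (Etil k) (fun l => cbar l k)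
      (fun l => ctil l k) (abar k) (atil k) (∫ ω'', xstar k ω'' ∂μ) (xstar k ω) i
      with hU
    have hUlin : U = fun ω =>
        (-((Etil k)⁻¹.mulVec (fun l => ctil l k) i) * atil k) * xstar k ω
        + ((Etil k)⁻¹.mulVec (fun l => ctil l k) i * atil k * (∫ ω'', xstar k ω'' ∂μ)
          - (Ebar k)⁻¹.mulVec (fun l => cbar l k) i * abar k
            * (∫ ω'', xstar k ω'' ∂μ)) := by
      funext ω; simp only [hU, mfFeedback2]; ring
    have hUL : MemLp U ((2 * o : ℕ) : ℝ≥0∞) μ := by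
      rw [hUlin]; exact (hXL.const_mul _).add (memLp_const _)
    have hUs : @Measurable Ω ℝ (sigmaUpTo x0 eps k) _ U := by
      rw [hUlin]; exact (hXs.const_mul _).add measurable_const
    obtain ⟨_, _, hmean', hcm', hQint⟩ := step_dev μ o N k ho (by omega) hx0m hepsm hindep
      (heps2o (k + 1) (by omega) (by omega)) (hepsmean (k + 1) (by omega) (by omega))
      (Ebar k) (Etil k) (fun l => cbar l k) (fun l => ctil l k) (abar k) (atil k)
      (fun l => bbar l k) (fun l => btil l k) i (xstar k) (xstar (k + 1)) U
      hXL hXs hUL hUs (hxstar_dyn i k hkN)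
    have hUmean : (∫ ω, U ω ∂μ)
        = -((Ebar k)⁻¹.mulVec (fun l => cbar l k) i * abar k * ∫ ω, xstar k ω ∂μ) :=
      hfeedint2 i k hkN
    constructor
    · rw [hmean', hUmean]; ring
    · rw [hcm']
      have hptQ : ∀ ω, ((atil k - ∑ j, (Etil k)⁻¹.mulVec (fun l => ctil l k) j
            * atil k * btil j k)
          + btil i k * ((Etil k)⁻¹.mulVec (fun l => ctil l k) i * atil k))
          * (xstar k ω - ∫ ω', xstar k ω' ∂μ) + btil i k * (U ω - ∫ ω', U ω' ∂μ)
          = (atil k - ∑ j, (Etil k)⁻¹.mulVec (fun l => ctil l k) j * atil k * btil j k)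
            * (xstar k ω - ∫ ω', xstar k ω' ∂μ) := by
        intro ω
        rw [hUmean]
        simp only [hU, mfFeedback2]
        ring
      have hcongr : (∫ ω, (((atil k - ∑ j, (Etil k)⁻¹.mulVec (fun l => ctil l k) j
            * atil k * btil j k)
          + btil i k * ((Etil k)⁻¹.mulVec (fun l => ctil l k) i * atil k))
          * (xstar k ω - ∫ ω', xstar k ω' ∂μ)
          + btil i k * (U ω - ∫ ω', U ω' ∂μ)) ^ (2 * o) ∂μ)
          = ∫ ω, (atil k - ∑ j, (Etil k)⁻¹.mulVec (fun l => ctil l k) j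
              * atil k * btil j k) ^ (2 * o)
            * (xstar k ω - ∫ ω', xstar k ω' ∂μ) ^ (2 * o) ∂μ := by
        apply integral_congr_ae
        filter_upwards with ω
        rw [hptQ ω, mul_pow]
      rw [hcongr, integral_const_mul]
      ring
  -- values of the equilibrium feedback cost terms
  have hstage_vals : ∀ (i : Fin I) (k : ℕ), k < N →
      ((∫ ω, (mfFeedback2 (Ebar k) (Etil k) (fun l => cbar l k) (fun l => ctil l k)
          (abar k) (atil k) (∫ ω', xstar k ω' ∂μ) (xstar k ω) i
          - ∫ ω', mfFeedback2 (Ebar k) (Etil k) (fun l => cbar l k) (fun l => ctil l k)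
              (abar k) (atil k) (∫ ω'', xstar k ω'' ∂μ) (xstar k ω') i ∂μ) ^ (2 * o) ∂μ)
        = ((Etil k)⁻¹.mulVec (fun l => ctil l k) i * atil k) ^ (2 * o)
            * ∫ ω, (xstar k ω - ∫ ω', xstar k ω' ∂μ) ^ (2 * o) ∂μ) ∧
      ((∫ ω, mfFeedback2 (Ebar k) (Etil k) (fun l => cbar l k) (fun l => ctil l k)
          (abar k) (atil k) (∫ ω', xstar k ω' ∂μ) (xstar k ω) i ∂μ) ^ (2 * p)
        = ((Ebar k)⁻¹.mulVec (fun l => cbar l k) i * abar k) ^ (2 * p)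
            * (∫ ω, xstar k ω ∂μ) ^ (2 * p)) := by
    intro i k hkN
    have hUmean := hfeedint2 i k hkN
    constructor
    · have hpt : ∀ ω, mfFeedback2 (Ebar k) (Etil k) (fun l => cbar l k)
          (fun l => ctil l k) (abar k) (atil k) (∫ ω', xstar k ω' ∂μ) (xstar k ω) i
          - (∫ ω', mfFeedback2 (Ebar k) (Etil k) (fun l => cbar l k) (fun l => ctil l k)
              (abar k) (atil k) (∫ ω'', xstar k ω'' ∂μ) (xstar k ω') i ∂μ)
          = (-((Etil k)⁻¹.mulVec (fun l => ctil l k) i * atil k))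
            * (xstar k ω - ∫ ω', xstar k ω' ∂μ) := by
        intro ω
        rw [hUmean]
        simp only [mfFeedback2]
        ring
      have hcongr : (∫ ω, (mfFeedback2 (Ebar k) (Etil k) (fun l => cbar l k)
          (fun l => ctil l k) (abar k) (atil k) (∫ ω', xstar k ω' ∂μ) (xstar k ω) i
          - ∫ ω', mfFeedback2 (Ebar k) (Etil k) (fun l => cbar l k) (fun l => ctil l k)
              (abar k) (atil k) (∫ ω'', xstar k ω'' ∂μ) (xstar k ω') i ∂μ) ^ (2 * o) ∂μ)
          = ∫ ω, ((Etil k)⁻¹.mulVec (fun l => ctil l k) i * atil k) ^ (2 * o)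
              * (xstar k ω - ∫ ω', xstar k ω' ∂μ) ^ (2 * o) ∂μ := by
        apply integral_congr_ae
        filter_upwards with ω
        rw [hpt ω, mul_pow, hne.neg_pow]
      rw [hcongr, integral_const_mul]
    · rw [hUmean, show -((Ebar k)⁻¹.mulVec (fun l => cbar l k) i * abar k
          * ∫ ω, xstar k ω ∂μ)
          = (-((Ebar k)⁻¹.mulVec (fun l => cbar l k) i * abar k)) * ∫ ω, xstar k ω ∂μ
        from by ring, mul_pow, hnpe.neg_pow]
  -- Part 2: value of the equilibrium cost
  have hpart2 : ∀ i : Fin I,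
      momentCost μ N p o (qN i) (qbarN i) (q i) (qbar i) (r i) (rbar i) xstar
          (fun k ω => mfFeedback2 (Ebar k) (Etil k) (fun l => cbar l k)
            (fun l => ctil l k) (abar k) (atil k)
            (∫ ω', xstar k ω' ∂μ) (xstar k ω) i)
        = alpha i 0 * (∫ ω, (x0 ω - ∫ ω', x0 ω' ∂μ) ^ (2 * o) ∂μ)
            + alphabar i 0 * (∫ ω, x0 ω ∂μ) ^ (2 * p) := by
    intro i
    set Gs : ℕ → ℝ := fun k =>
        alpha i k * (∫ ω, (xstar k ω - ∫ ω', xstar k ω' ∂μ) ^ (2 * o) ∂μ)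
        + alphabar i k * (∫ ω, xstar k ω ∂μ) ^ (2 * p) with hGs
    have hstage : ∀ k ∈ Finset.range N,
        (q i k * (∫ ω, (xstar k ω - ∫ ω', xstar k ω' ∂μ) ^ (2 * o) ∂μ)
          + qbar i k * (∫ ω, xstar k ω ∂μ) ^ (2 * p)
          + r i k * (∫ ω, ((fun k ω => mfFeedback2 (Ebar k) (Etil k) (fun l => cbar l k)
                (fun l => ctil l k) (abar k) (atil k)
                (∫ ω', xstar k ω' ∂μ) (xstar k ω) i) k ω
              - ∫ ω', (fun k ω => mfFeedback2 (Ebar k) (Etil k) (fun l => cbar l k)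
                (fun l => ctil l k) (abar k) (atil k)
                (∫ ω', xstar k ω' ∂μ) (xstar k ω) i) k ω' ∂μ) ^ (2 * o) ∂μ)
          + rbar i k * (∫ ω, (fun k ω => mfFeedback2 (Ebar k) (Etil k) (fun l => cbar l k)
                (fun l => ctil l k) (abar k) (atil k)
                (∫ ω', xstar k ω' ∂μ) (xstar k ω) i) k ω ∂μ) ^ (2 * p))
        = Gs k - Gs (k + 1) := by
      intro k hkr
      have hkN : k < N := Finset.mem_range.mp hkr
      obtain ⟨hm, hc⟩ := hstar_step i k hkN
      obtain ⟨hv1, hv2⟩ := hstage_vals i k hkN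
      simp only [hGs]
      rw [hv1, hv2, hc, hm,
        mul_pow (abar k - ∑ j, (Ebar k)⁻¹.mulVec (fun l => cbar l k) j * abar k * bbar j k)
          (∫ ω, xstar k ω ∂μ) (2 * p)]
      linear_combination
        (-(∫ ω, (xstar k ω - ∫ ω', xstar k ω' ∂μ) ^ (2 * o) ∂μ)) * halpha i k hkN
        + (-((∫ ω, xstar k ω ∂μ) ^ (2 * p))) * halphabar i k hkN
    have hterm : qN i * (∫ ω, (xstar N ω - ∫ ω', xstar N ω' ∂μ) ^ (2 * o) ∂μ)
        + qbarN i * (∫ ω, xstar N ω ∂μ) ^ (2 * p) = Gs N := by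
      simp only [hGs]
      rw [halphaN i, halphabarN i]
    simp only [momentCost]
    rw [Finset.sum_congr rfl hstage, hterm, Finset.sum_range_sub' (fun k => Gs k)]
    simp only [hGs, hxstar0]
    ring
  refine ⟨?_, hpart2⟩
  intro i u hu2o huad x hx00 hdynx
  have hULk : ∀ k, k < N → MemLp (u k) ((2 * o : ℕ) : ℝ≥0∞) μ := fun k hk =>
    (my_memLp_iff_integrable_pow _ hn0 hne
      (((huad k hk).mono (sigmaUpTo_le hx0m hepsm k) le_rfl).aestronglyMeasurable)).mp
      (hu2o k hk)
  have htraj : ∀ k, k ≤ N → MemLp (x k) ((2 * o : ℕ) : ℝ≥0∞) μ ∧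
      @Measurable Ω ℝ (sigmaUpTo x0 eps k) _ (x k) := by
    intro k
    induction k with
    | zero =>
      intro _
      rw [hx00]
      exact ⟨(my_memLp_iff_integrable_pow _ hn0 hne hx0m.aestronglyMeasurable).mp hx02o,
        x0_meas_sigmaUpTo 0⟩
    | succ k ih =>
      intro hk1
      have hkN : k < N := by omega
      obtain ⟨hXL, hXs⟩ := ih (by omega)
      obtain ⟨h1, h2, _, _, _⟩ := step_dev μ o N k ho (by omega) hx0m hepsm hindep
        (heps2o (k + 1) (by omega) (by omega)) (hepsmean (k + 1) (by omega) (by omega))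
        (Ebar k) (Etil k) (fun l => cbar l k) (fun l => ctil l k) (abar k) (atil k)
        (fun l => bbar l k) (fun l => btil l k) i (x k) (x (k + 1)) (u k)
        hXL hXs (hULk k hkN) (huad k hkN) (hdynx k hkN)
      exact ⟨h1, h2⟩
  have hcost : ∀ (d k : ℕ), k + d = N →
      alpha i k * (∫ ω, (x k ω - ∫ ω', x k ω' ∂μ) ^ (2 * o) ∂μ)
        + alphabar i k * (∫ ω, x k ω ∂μ) ^ (2 * p)
      ≤ (qN i * (∫ ω, (x N ω - ∫ ω', x N ω' ∂μ) ^ (2 * o) ∂μ)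
          + qbarN i * (∫ ω, x N ω ∂μ) ^ (2 * p))
        + ∑ k' ∈ Finset.Ico k N,
            (q i k' * (∫ ω, (x k' ω - ∫ ω', x k' ω' ∂μ) ^ (2 * o) ∂μ)
              + qbar i k' * (∫ ω, x k' ω ∂μ) ^ (2 * p)
              + r i k' * (∫ ω, (u k' ω - ∫ ω', u k' ω' ∂μ) ^ (2 * o) ∂μ)
              + rbar i k' * (∫ ω, u k' ω ∂μ) ^ (2 * p)) := by
    intro d
    induction d with
    | zero =>
      intro k hk
      have hkN : k = N := by omega
      subst hkN
      rw [Finset.Ico_self, Finset.sum_empty, halphaN i, halphabarN i, add_zero]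
    | succ d ih =>
      intro k hk
      have hkN : k < N := by omega
      obtain ⟨hXL, hXs⟩ := htraj k (by omega)
      have hUL := hULk k hkN
      have hUs := huad k hkN
      obtain ⟨hXL', _, hmean', hcm', hQint⟩ := step_dev μ o N k ho (by omega) hx0m hepsm
        hindep (heps2o (k + 1) (by omega) (by omega)) (hepsmean (k + 1) (by omega) (by omega))
        (Ebar k) (Etil k) (fun l => cbar l k) (fun l => ctil l k) (abar k) (atil k)
        (fun l => bbar l k) (fun l => btil l k) i (x k) (x (k + 1)) (u k)
        hXL hXs hUL hUs (hdynx k hkN)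
      have hαnn : 0 ≤ alpha i (k + 1) := halpha_nn i (k + 1) (by omega)
      have hᾱnn : 0 ≤ alphabar i (k + 1) := halphabar_nn i (k + 1) (by omega)
      have hCnn : 0 ≤ alpha i (k + 1) * ∫ ω, eps (k + 1) ω ^ (2 * o) ∂μ :=
        mul_nonneg hαnn (hm2nn (k + 1))
      have hXm : Measurable (x k) := hXs.mono (sigmaUpTo_le hx0m hepsm k) le_rfl
      have hUm : Measurable (u k) := hUs.mono (sigmaUpTo_le hx0m hepsm k) le_rfl
      have hdx : Integrable (fun ω => (x k ω - ∫ ω', x k ω' ∂μ) ^ (2 * o)) μ :=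
        (my_memLp_iff_integrable_pow _ hn0 hne
          ((hXm.sub measurable_const).aestronglyMeasurable)).mpr
          (hXL.sub (memLp_const _))
      have hdu : Integrable (fun ω => (u k ω - ∫ ω', u k ω' ∂μ) ^ (2 * o)) μ :=
        (my_memLp_iff_integrable_pow _ hn0 hne
          ((hUm.sub measurable_const).aestronglyMeasurable)).mpr
          (hUL.sub (memLp_const _))
      have hpt : ∀ ω,
          (r i k * ((Etil k)⁻¹.mulVec (fun l => ctil l k) i * atil k) ^ (2 * o)
            + (alpha i (k + 1) * ∫ ω', eps (k + 1) ω' ^ (2 * o) ∂μ)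
              * (atil k - ∑ j, (Etil k)⁻¹.mulVec (fun l => ctil l k) j * atil k * btil j k)
                ^ (2 * o))
            * (x k ω - ∫ ω', x k ω' ∂μ) ^ (2 * o)
          ≤ r i k * (u k ω - ∫ ω', u k ω' ∂μ) ^ (2 * o)
            + (alpha i (k + 1) * ∫ ω', eps (k + 1) ω' ^ (2 * o) ∂μ)
              * (((atil k - ∑ j, (Etil k)⁻¹.mulVec (fun l => ctil l k) j * atil k * btil j k)
                  + btil i k * ((Etil k)⁻¹.mulVec (fun l => ctil l k) i * atil k))
                  * (x k ω - ∫ ω', x k ω' ∂μ)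
                + btil i k * (u k ω - ∫ ω', u k ω' ∂μ)) ^ (2 * o) :=
        fun ω => my_stage_scalar (2 * o) hne hn0 (r i k)
          (alpha i (k + 1) * ∫ ω', eps (k + 1) ω' ^ (2 * o) ∂μ) (btil i k) (kappatil i k)
          ((Etil k)⁻¹.mulVec (fun l => ctil l k) i * atil k)
          (atil k - ∑ j, (Etil k)⁻¹.mulVec (fun l => ctil l k) j * atil k * btil j k)
          (x k ω - ∫ ω', x k ω' ∂μ) (u k ω - ∫ ω', u k ω' ∂μ)
          (hr i k hkN) hCnn (hfoc_t i k hkN) (hfocp_t i k hkN)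
      have hmono := integral_mono (hdx.const_mul _) ((hdu.const_mul _).add
        (hQint.const_mul _)) hpt
      simp only [Pi.add_apply] at hmono
      rw [integral_add (hdu.const_mul _) (hQint.const_mul _), integral_const_mul,
        integral_const_mul, integral_const_mul] at hmono
      have hflu : (r i k * ((Etil k)⁻¹.mulVec (fun l => ctil l k) i * atil k) ^ (2 * o)
            + (alpha i (k + 1) * ∫ ω, eps (k + 1) ω ^ (2 * o) ∂μ)
              * (atil k - ∑ j, (Etil k)⁻¹.mulVec (fun l => ctil l k) j * atil k * btil j k)
                ^ (2 * o))
            * (∫ ω, (x k ω - ∫ ω', x k ω' ∂μ) ^ (2 * o) ∂μ)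
          ≤ r i k * (∫ ω, (u k ω - ∫ ω', u k ω' ∂μ) ^ (2 * o) ∂μ)
            + alpha i (k + 1)
              * ∫ ω, (x (k + 1) ω - ∫ ω', x (k + 1) ω' ∂μ) ^ (2 * o) ∂μ := by
        rw [hcm']
        calc _ ≤ _ := hmono
          _ = _ := by ring
      have hmean_ineq : (rbar i k * ((Ebar k)⁻¹.mulVec (fun l => cbar l k) i * abar k)
              ^ (2 * p)
            + alphabar i (k + 1)
              * (abar k - ∑ j, (Ebar k)⁻¹.mulVec (fun l => cbar l k) j * abar k * bbar j k)
                ^ (2 * p))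
            * (∫ ω, x k ω ∂μ) ^ (2 * p)
          ≤ rbar i k * (∫ ω, u k ω ∂μ) ^ (2 * p)
            + alphabar i (k + 1) * (∫ ω, x (k + 1) ω ∂μ) ^ (2 * p) := by
        rw [hmean']
        have e : (abar k - ∑ j, (Ebar k)⁻¹.mulVec (fun l => cbar l k) j * abar k * bbar j k)
              + (Ebar k)⁻¹.mulVec (fun l => cbar l k) i * abar k * bbar i k
            = (abar k - ∑ j, (Ebar k)⁻¹.mulVec (fun l => cbar l k) j * abar k * bbar j k)
              + bbar i k * ((Ebar k)⁻¹.mulVec (fun l => cbar l k) i * abar k) := by ring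
        rw [e]
        exact my_stage_scalar (2 * p) hnpe hnp0 (rbar i k) (alphabar i (k + 1)) (bbar i k)
          (kappabar i k) ((Ebar k)⁻¹.mulVec (fun l => cbar l k) i * abar k)
          (abar k - ∑ j, (Ebar k)⁻¹.mulVec (fun l => cbar l k) j * abar k * bbar j k)
          (∫ ω, x k ω ∂μ) (∫ ω, u k ω ∂μ)
          (hrbar i k hkN) hᾱnn (hfoc_b i k hkN) (hfocp_b i k hkN)
      have ihs := ih (k + 1) (by omega)
      rw [Finset.sum_eq_sum_Ico_succ_bot hkN, halpha i k hkN, halphabar i k hkN]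
      linarith [hflu, hmean_ineq, ihs]
  have h0 := hcost N 0 (by omega)
  rw [hx00] at h0
  rw [hpart2 i]
  unfold momentCost
  rw [Finset.range_eq_Ico]
  exact h0
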